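/- arXiv:2602.16148 — 3 statements merged into one kernel-verified Lean document; each statement's English description precedes it below -/
import Mathlib

section
/- Let f : ℝ^d → ℝ be μ-strongly convex and L-smooth, and let 2/(L+μ) ≤ α < 2/L. Then for all x, y, ‖(x − α∇f(x)) − (y − α∇f(y))‖² ≤ (1 − αL)²‖x − y‖². -/
/-!
Write `Δx = x - y` and `Δg = g x - g y`. Strong convexity and `L`-Lipschitz continuity of the
gradient give the interpolation inequality `‖Δg‖² + μL‖Δx‖² ≤ (L + μ)⟪Δg, Δx⟫`: the function
`f - (μ/2)‖·‖²` is convex and satisfies the quadratic upper bound with constant `L - μ`, hence its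
gradient is co-coercive. Expanding `‖Δx - αΔg‖²`, this inequality absorbs the inner product as soon
as `α ≥ 2/(L + μ)`, and the remaining `‖Δg‖²` is bounded by `L²‖Δx‖²`, which leaves exactly
`(1 - αL)²‖Δx‖²`.
-/

open InnerProductSpace Set

variable {E : Type*} [NormedAddCommGroup E] [InnerProductSpace ℝ E]

theorem norm_sub_sq_eq_norm_sq_sub_norm_sq_sub_two_inner (x y : E) :
    ‖y - x‖ ^ 2 = ‖y‖ ^ 2 - ‖x‖ ^ 2 - 2 * ⟪x, y - x⟫_ℝ := by
  rw [norm_sub_sq_real, inner_sub_right, real_inner_self_eq_norm_sq, real_inner_comm]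
  ring

theorem norm_sub_sq_le_mul_inner_sub_of_quadratic_bounds {h : E → ℝ} {G : E → E} {K : ℝ}
    (hK : 0 < K) (hlower : ∀ x y, h x + ⟪G x, y - x⟫_ℝ ≤ h y)
    (hupper : ∀ x y, h y ≤ h x + ⟪G x, y - x⟫_ℝ + K / 2 * ‖y - x‖ ^ 2) (x y : E) :
    ‖G x - G y‖ ^ 2 ≤ K * ⟪G x - G y, x - y⟫_ℝ := by
  -- compare both bounds at the point `z` minimizing the upper bound around `q`
  have gap : ∀ p q, h p + ⟪G p, q - p⟫_ℝ + ‖G p - G q‖ ^ 2 / (2 * K) ≤ h q := by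
    intro p q
    set z := q + K⁻¹ • (G p - G q)
    have h1 := hlower p z
    have h2 := hupper q z
    have hz1 : z - p = (q - p) + K⁻¹ • (G p - G q) := by simp only [z]; abel
    have hz2 : z - q = K⁻¹ • (G p - G q) := by simp only [z]; abel
    rw [hz1, inner_add_right, real_inner_smul_right] at h1
    rw [hz2, real_inner_smul_right, norm_smul, Real.norm_eq_abs, abs_inv, abs_of_pos hK] at h2
    have hgain : K⁻¹ * ⟪G p, G p - G q⟫_ℝ - K⁻¹ * ⟪G q, G p - G q⟫_ℝ
        - K / 2 * (K⁻¹ * ‖G p - G q‖) ^ 2 = ‖G p - G q‖ ^ 2 / (2 * K) := by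
      rw [← mul_sub, ← inner_sub_left, real_inner_self_eq_norm_sq]
      field_simp
      ring
    linarith
  have h1 := gap x y
  have h2 := gap y x
  rw [norm_sub_rev] at h2
  have hsum : ⟪G x - G y, x - y⟫_ℝ = - ⟪G x, y - x⟫_ℝ - ⟪G y, x - y⟫_ℝ := by
    rw [inner_sub_left, ← neg_sub x y, inner_neg_right]; ring
  have : ‖G x - G y‖ ^ 2 / K ≤ ⟪G x - G y, x - y⟫_ℝ := by
    rw [hsum]; linarith [show ‖G x - G y‖ ^ 2 / K = 2 * (‖G x - G y‖ ^ 2 / (2 * K)) by field_simp]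
  rwa [div_le_iff₀ hK, mul_comm] at this

theorem norm_sub_smul_sq_le_of_inner_lower_bound {u v : E} {μ L α : ℝ} (hLμ : 0 < L + μ)
    (hinner : ‖v‖ ^ 2 + μ * L * ‖u‖ ^ 2 ≤ (L + μ) * ⟪v, u⟫_ℝ) (hv : ‖v‖ ≤ L * ‖u‖)
    (hα : 2 / (L + μ) ≤ α) : ‖u - α • v‖ ^ 2 ≤ (1 - α * L) ^ 2 * ‖u‖ ^ 2 := by
  have hα' : 2 ≤ α * (L + μ) := (div_le_iff₀ hLμ).mp hα
  have hα_pos : 0 < α := (div_pos two_pos hLμ).trans_le hα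
  have hv_sq : ‖v‖ ^ 2 ≤ L ^ 2 * ‖u‖ ^ 2 := by
    rw [← mul_pow]; exact pow_le_pow_left₀ (norm_nonneg v) hv 2
  have hexpand : ‖u - α • v‖ ^ 2 = ‖u‖ ^ 2 - 2 * α * ⟪v, u⟫_ℝ + α ^ 2 * ‖v‖ ^ 2 := by
    rw [norm_sub_sq_real, real_inner_smul_right, norm_smul, Real.norm_eq_abs, mul_pow, sq_abs,
      real_inner_comm]
    ring
  -- `(L + μ)` times the gap between the two sides is `h1 + h2`
  have h1 : 0 ≤ 2 * α * ((L + μ) * ⟪v, u⟫_ℝ - (‖v‖ ^ 2 + μ * L * ‖u‖ ^ 2)) :=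
    mul_nonneg (by positivity) (by linarith)
  have h2 : 0 ≤ (α * (L + μ) - 2) * α * (L ^ 2 * ‖u‖ ^ 2 - ‖v‖ ^ 2) :=
    mul_nonneg (mul_nonneg (by linarith) hα_pos.le) (by linarith)
  rw [hexpand]
  nlinarith

variable [CompleteSpace E]

theorem HasGradientAt.hasDerivAt_comp_add_smul {F : E → ℝ} {a x v : E} {t : ℝ}
    (hF : HasGradientAt F a (x + t • v)) :
    HasDerivAt (fun s : ℝ => F (x + s • v)) ⟪a, v⟫_ℝ t := by
  have hline : HasDerivAt (fun s : ℝ => x + s • v) v t := by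
    simpa using ((hasDerivAt_id t).smul_const v).const_add x
  simpa [toDual_apply_apply, Function.comp_def] using hF.hasFDerivAt.comp_hasDerivAt t hline

theorem HasGradientAt.sub_mul_norm_sq {f : E → ℝ} {a x : E} (hf : HasGradientAt f a x) (c : ℝ) :
    HasGradientAt (fun w => f w - c * ‖w‖ ^ 2) (a - (2 * c) • x) x := by
  rw [hasGradientAt_iff_hasFDerivAt] at hf ⊢
  refine (hf.sub ((hasFDerivAt_id x).norm_sq.const_mul c)).congr_fderiv ?_
  ext v
  simp
  ring

theorem ConvexOn.add_inner_le_of_hasGradientAt {F : E → ℝ} {a x : E}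
    (hF : ConvexOn ℝ univ F) (ha : HasGradientAt F a x) (y : E) :
    F x + ⟪a, y - x⟫_ℝ ≤ F y := by
  have hline : ConvexOn ℝ univ (fun t : ℝ => F (x + t • (y - x))) := by
    refine (hF.comp_affineMap (AffineMap.lineMap x y)).congr fun t _ => ?_
    simp [AffineMap.lineMap_apply, add_comm]
  have hderiv := (hline.le_slope_of_hasDerivAt (mem_univ 0) (mem_univ 1) one_pos
    (by simpa using ha : HasGradientAt F a (x + (0 : ℝ) • (y - x))).hasDerivAt_comp_add_smul)
  simp only [slope_def_field, zero_smul, add_zero, one_smul, add_sub_cancel, sub_zero,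
    div_one] at hderiv
  linarith

theorem StrongConvexOn.add_inner_add_le_of_hasGradientAt {f : E → ℝ} {a x : E} {μ : ℝ}
    (hf : StrongConvexOn univ μ f) (ha : HasGradientAt f a x) (y : E) :
    f x + ⟪a, y - x⟫_ℝ + μ / 2 * ‖y - x‖ ^ 2 ≤ f y := by
  have hφ := (strongConvexOn_iff_convex.mp hf).add_inner_le_of_hasGradientAt
    (ha.sub_mul_norm_sq (μ / 2)) y
  rw [inner_sub_left, real_inner_smul_left] at hφ
  rw [norm_sub_sq_eq_norm_sq_sub_norm_sq_sub_two_inner]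
  linear_combination hφ

theorem StrongConvexOn.mul_norm_sub_sq_le_inner_sub {f : E → ℝ} {g : E → E} {μ : ℝ}
    (hf : StrongConvexOn univ μ f) (hgrad : ∀ x, HasGradientAt f (g x) x) (x y : E) :
    μ * ‖x - y‖ ^ 2 ≤ ⟪g x - g y, x - y⟫_ℝ := by
  have h1 := hf.add_inner_add_le_of_hasGradientAt (hgrad x) y
  have h2 := hf.add_inner_add_le_of_hasGradientAt (hgrad y) x
  rw [norm_sub_rev, ← neg_sub x y, inner_neg_right] at h1
  rw [inner_sub_left]
  linarith

theorem le_add_inner_add_of_lipschitz_gradient {f : E → ℝ} {g : E → E} {L : ℝ}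
    (hgrad : ∀ x, HasGradientAt f (g x) x) (hlip : ∀ x y, ‖g x - g y‖ ≤ L * ‖x - y‖)
    (x y : E) : f y ≤ f x + ⟪g x, y - x⟫_ℝ + L / 2 * ‖y - x‖ ^ 2 := by
  set v := y - x
  set w : ℝ → ℝ := fun t => f (x + t • v) - t * ⟪g x, v⟫_ℝ - L / 2 * t ^ 2 * ‖v‖ ^ 2
  have hw : ∀ t, HasDerivAt w (⟪g (x + t • v), v⟫_ℝ - ⟪g x, v⟫_ℝ - L * t * ‖v‖ ^ 2) t := by
    intro t
    have := (((hgrad (x + t • v)).hasDerivAt_comp_add_smul).sub ((hasDerivAt_id t).mul_const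
      ⟪g x, v⟫_ℝ)).sub (((hasDerivAt_pow 2 t).const_mul (L / 2)).mul_const (‖v‖ ^ 2))
    exact this.congr_deriv (by push_cast; ring)
  have hslope : ∀ t, 0 ≤ t → ⟪g (x + t • v), v⟫_ℝ - ⟪g x, v⟫_ℝ ≤ L * t * ‖v‖ ^ 2 := by
    intro t ht
    calc ⟪g (x + t • v), v⟫_ℝ - ⟪g x, v⟫_ℝ = ⟪g (x + t • v) - g x, v⟫_ℝ :=
          (inner_sub_left ..).symm
      _ ≤ ‖g (x + t • v) - g x‖ * ‖v‖ := real_inner_le_norm _ _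
      _ ≤ L * ‖t • v‖ * ‖v‖ := by
        gcongr
        simpa using hlip (x + t • v) x
      _ = L * t * ‖v‖ ^ 2 := by rw [norm_smul, Real.norm_of_nonneg ht]; ring
  have hanti : AntitoneOn w (Ici 0) := by
    refine antitoneOn_of_deriv_nonpos (convex_Ici 0) ?_ ?_ fun t ht => ?_
    · exact HasDerivAt.continuousOn fun t _ => hw t
    · exact fun t _ => (hw t).differentiableAt.differentiableWithinAt
    · rw [interior_Ici] at ht
      rw [(hw t).deriv]
      linarith [hslope t ht.le]
  have := hanti (show (0 : ℝ) ∈ Ici 0 by simp) (show (1 : ℝ) ∈ Ici 0 by simp) zero_le_one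
  simp only [w, v, zero_smul, add_zero, one_smul, add_sub_cancel] at this
  linarith

theorem StrongConvexOn.norm_sub_sq_add_mul_le_inner_sub_of_lipschitz_gradient {f : E → ℝ}
    {g : E → E} {μ L : ℝ} (hμ : 0 ≤ μ) (hμL : μ ≤ L) (hf : StrongConvexOn univ μ f)
    (hgrad : ∀ x, HasGradientAt f (g x) x) (hlip : ∀ x y, ‖g x - g y‖ ≤ L * ‖x - y‖) (x y : E) :
    ‖g x - g y‖ ^ 2 + μ * L * ‖x - y‖ ^ 2 ≤ (L + μ) * ⟪g x - g y, x - y⟫_ℝ := by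
  rcases hμL.eq_or_lt with rfl | hμL
  · have hlip_sq : ‖g x - g y‖ ^ 2 ≤ μ ^ 2 * ‖x - y‖ ^ 2 := by
      rw [← mul_pow]; exact pow_le_pow_left₀ (norm_nonneg _) (hlip x y) 2
    have hmono := mul_le_mul_of_nonneg_left (hf.mul_norm_sub_sq_le_inner_sub hgrad x y) hμ
    linear_combination hlip_sq + 2 * hmono
  · set G : E → E := fun z => g z - μ • z
    have hlower : ∀ p q, f p - μ / 2 * ‖p‖ ^ 2 + ⟪G p, q - p⟫_ℝ ≤ f q - μ / 2 * ‖q‖ ^ 2 := by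
      intro p q
      have := (strongConvexOn_iff_convex.mp hf).add_inner_le_of_hasGradientAt
        ((hgrad p).sub_mul_norm_sq (μ / 2)) q
      rwa [mul_div_cancel₀ μ two_ne_zero] at this
    have hupper : ∀ p q, f q - μ / 2 * ‖q‖ ^ 2 ≤
        f p - μ / 2 * ‖p‖ ^ 2 + ⟪G p, q - p⟫_ℝ + (L - μ) / 2 * ‖q - p‖ ^ 2 := by
      intro p q
      have := le_add_inner_add_of_lipschitz_gradient hgrad hlip p q
      rw [norm_sub_sq_eq_norm_sq_sub_norm_sq_sub_two_inner] at this ⊢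
      simp only [G, inner_sub_left, real_inner_smul_left]
      linear_combination this
    have hco := norm_sub_sq_le_mul_inner_sub_of_quadratic_bounds (sub_pos.mpr hμL)
      hlower hupper x y
    have hGsub : G x - G y = (g x - g y) - μ • (x - y) := by simp only [G]; module
    rw [hGsub, norm_sub_sq_real, real_inner_smul_right, norm_smul, Real.norm_of_nonneg hμ,
      inner_sub_left (g x - g y), real_inner_smul_left, real_inner_self_eq_norm_sq] at hco
    linear_combination hco

theorem stmt_4_general {d : ℕ} (f : EuclideanSpace ℝ (Fin d) → ℝ)
    (g : EuclideanSpace ℝ (Fin d) → EuclideanSpace ℝ (Fin d))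
    (μ L α : ℝ) (hμ : 0 < μ) (hμL : μ ≤ L)
    (hgrad : ∀ x, HasGradientAt f (g x) x)
    (hsc : StrongConvexOn Set.univ μ f)
    (hsmooth : ∀ x y, ‖g x - g y‖ ≤ L * ‖x - y‖)
    (hα0 : 2 / (L + μ) ≤ α)
    (x y : EuclideanSpace ℝ (Fin d)) :
    ‖(x - α • g x) - (y - α • g y)‖ ^ 2 ≤ (1 - α * L) ^ 2 * ‖x - y‖ ^ 2 := by
  have hstep : (x - α • g x) - (y - α • g y) = (x - y) - α • (g x - g y) := by module
  rw [hstep]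
  exact norm_sub_smul_sq_le_of_inner_lower_bound (by linarith)
    (hsc.norm_sub_sq_add_mul_le_inner_sub_of_lipschitz_gradient hμ.le hμL hgrad hsmooth x y)
    (hsmooth x y) hα0

/-- If `f` is `μ`-strongly convex and `L`-smooth (`0 < μ ≤ L`) and
`2/(L+μ) ≤ α < 2/L`, then the gradient step contracts with factor `(1 − αL)²`. -/
theorem stmt_4 {d : ℕ} (f : EuclideanSpace ℝ (Fin d) → ℝ)
    (g : EuclideanSpace ℝ (Fin d) → EuclideanSpace ℝ (Fin d))
    (μ L α : ℝ) (hμ : 0 < μ) (hμL : μ ≤ L)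
    (hgrad : ∀ x, HasGradientAt f (g x) x)
    (hsc : StrongConvexOn Set.univ μ f)
    (hsmooth : ∀ x y, ‖g x - g y‖ ≤ L * ‖x - y‖)
    (hα0 : 2 / (L + μ) ≤ α) (hα : α < 2 / L)
    (x y : EuclideanSpace ℝ (Fin d)) :
    ‖(x - α • g x) - (y - α • g y)‖ ^ 2 ≤ (1 - α * L) ^ 2 * ‖x - y‖ ^ 2 :=
  stmt_4_general f g μ L α hμ hμL hgrad hsc hsmooth hα0 x y
end

section
/- Let A, B be symmetric commuting n×n matrices with A𝟙=𝟙, B ⪰ 0, null(B)=span(𝟙), A²+B ⪯ I, and p ∈ (0,1]. Suppose w, u ∈ ℝⁿ with u ∈ range(√B), z = w − √B u, and Bz⋆ = 0 where z⋆ := w⋆ − √B u⋆ for a reference point with u⋆ ∈ range(√B). Let θ be Bernoulli(p), x⁺ := prox_{αr}((θA+(1−θ)I)z), x⋆ := prox_{αr}(Az⋆), u⁺ := u + pθ√B z. Then E[‖x⁺ − x⋆‖² + (1/p²)‖u⁺ − u⋆‖²] ≤ ‖w − w⋆‖² + (1 − p²σ_m(B))·(1/p²)‖u − u⋆‖². 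-/
open Matrix

lemma dot_symm {n : ℕ} (M : Matrix (Fin n) (Fin n) ℝ) (h : Mᵀ = M) (a b : Fin n → ℝ) :
    a ⬝ᵥ (M *ᵥ b) = (M *ᵥ a) ⬝ᵥ b := by
  rw [dotProduct_mulVec]
  conv_rhs => rw [← h, mulVec_transpose]

lemma dot_self_nonneg {n : ℕ} (v : Fin n → ℝ) : 0 ≤ v ⬝ᵥ v :=
  Finset.sum_nonneg fun i _ => mul_self_nonneg _

lemma prox_nonexpansive {n : ℕ} (r : (Fin n → ℝ) → ℝ) (hconv : ConvexOn ℝ Set.univ r)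
    (α : ℝ) (hα : 0 < α) (prox : (Fin n → ℝ) → (Fin n → ℝ))
    (hprox : ∀ x, IsMinOn (fun s => r s + 1 / (2 * α) * ((s - x) ⬝ᵥ (s - x)))
      Set.univ (prox x))
    (a b : Fin n → ℝ) :
    (prox a - prox b) ⬝ᵥ (prox a - prox b) ≤ (a - b) ⬝ᵥ (a - b) := by
  have hc : 0 < 1 / (2 * α) := by positivity
  have step : ∀ (x y : Fin n → ℝ) (t : ℝ), 0 < t → t ≤ 1 →
      t * (r (prox x) - r (prox y)) ≤ 1 / (2 * α) *
        (2 * t * ((prox x - x) ⬝ᵥ (prox y - prox x)) +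
          t ^ 2 * ((prox y - prox x) ⬝ᵥ (prox y - prox x))) := by
    intro x y t ht0 ht1
    set px := prox x
    set py := prox y
    have hmin := isMinOn_iff.mp (hprox x) ((1 - t) • px + t • py) (Set.mem_univ _)
    have hcv : r ((1 - t) • px + t • py) ≤ (1 - t) * r px + t * r py := by
      have := hconv.2 (Set.mem_univ px) (Set.mem_univ py)
        (by linarith : (0:ℝ) ≤ 1 - t) (le_of_lt ht0) (by ring)
      simpa [smul_eq_mul] using this
    have hexp : (((1 - t) • px + t • py) - x) ⬝ᵥ (((1 - t) • px + t • py) - x) =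
        ((px - x) ⬝ᵥ (px - x)) + 2 * t * ((px - x) ⬝ᵥ (py - px)) +
          t ^ 2 * ((py - px) ⬝ᵥ (py - px)) := by
      have h1 : ((1 - t) • px + t • py) - x = (px - x) + t • (py - px) := by module
      rw [h1]
      simp only [dotProduct_add, add_dotProduct, dotProduct_smul, smul_dotProduct,
        smul_eq_mul]
      rw [dotProduct_comm (py - px) (px - x)]
      ring
    rw [hexp] at hmin
    linarith [hmin, hcv]
  set q := prox a - prox b with hq
  have key : ∀ t : ℝ, 0 < t → t ≤ 1 → q ⬝ᵥ q ≤ (a - b) ⬝ᵥ q + t * (q ⬝ᵥ q) := by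
    intro t ht0 ht1
    have h1 := step a b t ht0 ht1
    have h2 := step b a t ht0 ht1
    have hN : (prox b - prox a) ⬝ᵥ (prox b - prox a) = q ⬝ᵥ q := by
      have h8 : prox b - prox a = -q := by rw [hq]; abel
      rw [h8]; simp
    have hN' : (prox a - prox b) ⬝ᵥ (prox a - prox b) = q ⬝ᵥ q := rfl
    have hX : (prox a - a) ⬝ᵥ (prox b - prox a) + (prox b - b) ⬝ᵥ (prox a - prox b) =
        (a - b) ⬝ᵥ q - q ⬝ᵥ q := by
      simp only [sub_dotProduct, dotProduct_sub, hq]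
      ring
    rw [hN] at h1
    rw [hN'] at h2
    have hs0 : 0 ≤ 2 * t * ((prox a - a) ⬝ᵥ (prox b - prox a)) + t ^ 2 * (q ⬝ᵥ q) +
        (2 * t * ((prox b - b) ⬝ᵥ (prox a - prox b)) + t ^ 2 * (q ⬝ᵥ q)) := by
      by_contra h
      push_neg at h
      have h9 := mul_neg_of_pos_of_neg hc h
      linarith [h1, h2]
    have hX2 : 2 * t * ((prox a - a) ⬝ᵥ (prox b - prox a)) +
        2 * t * ((prox b - b) ⬝ᵥ (prox a - prox b)) =
        2 * t * ((a - b) ⬝ᵥ q - q ⬝ᵥ q) := by linear_combination (2 * t) * hX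
    have hX0 : 0 ≤ 2 * t * ((a - b) ⬝ᵥ q - q ⬝ᵥ q) + 2 * t ^ 2 * (q ⬝ᵥ q) := by
      linarith
    have h6 : 2 * t * ((a - b) ⬝ᵥ q - q ⬝ᵥ q + t * (q ⬝ᵥ q)) =
        2 * t * ((a - b) ⬝ᵥ q - q ⬝ᵥ q) + 2 * t ^ 2 * (q ⬝ᵥ q) := by ring
    rw [← h6] at hX0
    have h7 : 0 ≤ (a - b) ⬝ᵥ q - q ⬝ᵥ q + t * (q ⬝ᵥ q) := by
      by_contra h
      push_neg at h
      have := mul_neg_of_pos_of_neg (by linarith : (0:ℝ) < 2 * t) h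
      linarith
    linarith
  have hqq : 0 ≤ q ⬝ᵥ q := dot_self_nonneg q
  have hfin : q ⬝ᵥ q ≤ (a - b) ⬝ᵥ q := by
    by_contra hcon
    push_neg at hcon
    rcases eq_or_lt_of_le hqq with h0 | h0
    · have := key 1 one_pos le_rfl
      nlinarith
    · set t := min 1 ((q ⬝ᵥ q - (a - b) ⬝ᵥ q) / (2 * (q ⬝ᵥ q))) with htdef
      have hgap : 0 < q ⬝ᵥ q - (a - b) ⬝ᵥ q := by linarith
      have ht0 : 0 < t := lt_min one_pos (by positivity)
      have ht1 : t ≤ 1 := min_le_left _ _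
      have := key t ht0 ht1
      have htb : t ≤ (q ⬝ᵥ q - (a - b) ⬝ᵥ q) / (2 * (q ⬝ᵥ q)) := min_le_right _ _
      have hne : q ⬝ᵥ q ≠ 0 := ne_of_gt h0
      have hcalc : t * (q ⬝ᵥ q) ≤ (q ⬝ᵥ q - (a - b) ⬝ᵥ q) / 2 := by
        calc t * (q ⬝ᵥ q) ≤ ((q ⬝ᵥ q - (a - b) ⬝ᵥ q) / (2 * (q ⬝ᵥ q))) * (q ⬝ᵥ q) :=
              mul_le_mul_of_nonneg_right htb hqq
          _ = (q ⬝ᵥ q - (a - b) ⬝ᵥ q) / 2 := by field_simp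
      linarith
  have hvv : 0 ≤ ((a - b) - q) ⬝ᵥ ((a - b) - q) := dot_self_nonneg _
  have hvexp : ((a - b) - q) ⬝ᵥ ((a - b) - q) =
      (a - b) ⬝ᵥ (a - b) - 2 * ((a - b) ⬝ᵥ q) + q ⬝ᵥ q := by
    simp only [sub_dotProduct, dotProduct_sub]
    rw [dotProduct_comm q a, dotProduct_comm q b, dotProduct_comm q q]
    ring
  rw [hvexp] at hvv
  linarith

lemma spec_psd {n : ℕ} (B : Matrix (Fin n) (Fin n) ℝ) (hB : B.PosSemidef) (σ : ℝ)
    (hσ : σ = sInf {t : ℝ | t ∈ spectrum ℝ B ∧ t ≠ 0}) :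
    (B * B - σ • B).PosSemidef := by
  have hH : B.IsHermitian := hB.1
  set μ := hH.eigenvalues with hμ
  have hg : ∀ i, 0 ≤ μ i * μ i - σ * μ i := by
    intro i
    rcases eq_or_ne (μ i) 0 with h | h
    · simp [h]
    · have hmem : μ i ∈ {t : ℝ | t ∈ spectrum ℝ B ∧ t ≠ 0} :=
        ⟨hH.eigenvalues_mem_spectrum_real i, h⟩
      have hbdd : BddBelow {t : ℝ | t ∈ spectrum ℝ B ∧ t ≠ 0} := by
        refine ⟨0, fun t ht => ?_⟩
        have h2 := ht.1
        rw [hH.spectrum_real_eq_range_eigenvalues] at h2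
        obtain ⟨j, hj⟩ := h2
        rw [← hj]
        exact hB.eigenvalues_nonneg j
      have hle : σ ≤ μ i := hσ ▸ csInf_le hbdd hmem
      nlinarith [hB.eigenvalues_nonneg i]
  have hspec := hH.spectral_theorem
  set V := (hH.eigenvectorUnitary : Matrix (Fin n) (Fin n) ℝ) with hV
  have hVV : star V * V = 1 := (Matrix.mem_unitaryGroup_iff').mp (hH.eigenvectorUnitary).2
  have hD : (RCLike.ofReal ∘ μ : Fin n → ℝ) = μ := by
    funext i; simp [RCLike.ofReal]
  rw [hD] at hspec
  have hform : B * B - σ • B = V * diagonal (fun i => μ i * μ i - σ * μ i) * star V := by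
    rw [hspec, Unitary.conjStarAlgAut_apply]
    have h1 : (V * diagonal μ * star V) * (V * diagonal μ * star V)
        = V * (diagonal μ * diagonal μ) * star V := by
      simp only [Matrix.mul_assoc]
      rw [← Matrix.mul_assoc (star V) V, hVV, Matrix.one_mul]
    have h2 : σ • (V * diagonal μ * star V) = V * (σ • diagonal μ) * star V := by
      rw [Matrix.mul_smul, Matrix.smul_mul]
    rw [h1, h2, ← Matrix.sub_mul, ← Matrix.mul_sub, diagonal_mul_diagonal, ← diagonal_smul,
      ← diagonal_sub]
    congr 1
  rw [hform]
  have := (posSemidef_diagonal_iff.mpr hg).mul_mul_conjTranspose_same V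
  rwa [← Matrix.star_eq_conjTranspose] at this

/-- The positive semidefinite square root of a positive semidefinite matrix, as defined in
the older Mathlib (`Matrix.PosSemidef.sqrt`, since removed). -/
noncomputable def Matrix.PosSemidef.sqrt {n : Type*} [Fintype n] [DecidableEq n]
    {A : Matrix n n ℝ} (hA : A.PosSemidef) : Matrix n n ℝ :=
  hA.1.eigenvectorUnitary.1 * diagonal ((↑) ∘ (Real.sqrt ·) ∘ hA.1.eigenvalues) *
  (star hA.1.eigenvectorUnitary : Matrix n n ℝ)

lemma sqrt_psd_aux {n : ℕ} {B : Matrix (Fin n) (Fin n) ℝ} (hB : B.PosSemidef) :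
    hB.sqrt.PosSemidef := by
  unfold Matrix.PosSemidef.sqrt
  have hg : ∀ i, 0 ≤ (((↑) ∘ (Real.sqrt ·) ∘ hB.1.eigenvalues : Fin n → ℝ) i) := by
    intro i
    simp [Real.sqrt_nonneg]
  have := (posSemidef_diagonal_iff.mpr hg).mul_mul_conjTranspose_same
    (hB.1.eigenvectorUnitary : Matrix (Fin n) (Fin n) ℝ)
  rwa [← Matrix.star_eq_conjTranspose] at this

lemma sqrt_mul_self_aux {n : ℕ} {B : Matrix (Fin n) (Fin n) ℝ} (hB : B.PosSemidef) :
    hB.sqrt * hB.sqrt = B := by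
  have hspec := hB.1.spectral_theorem
  rw [Unitary.conjStarAlgAut_apply] at hspec
  have hVV : star (hB.1.eigenvectorUnitary : Matrix (Fin n) (Fin n) ℝ) *
      (hB.1.eigenvectorUnitary : Matrix (Fin n) (Fin n) ℝ) = 1 :=
    (Matrix.mem_unitaryGroup_iff').mp (hB.1.eigenvectorUnitary).2
  unfold Matrix.PosSemidef.sqrt
  conv_rhs => rw [hspec]
  simp only [Matrix.mul_assoc]
  rw [← Matrix.mul_assoc (star _) (hB.1.eigenvectorUnitary : Matrix (Fin n) (Fin n) ℝ), hVV,
    Matrix.one_mul]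
  simp only [← Matrix.mul_assoc, diagonal_mul_diagonal]
  congr 3
  funext i
  simp [Real.mul_self_sqrt (hB.eigenvalues_nonneg i)]

set_option maxHeartbeats 1000000 in
/-- Lemma 2, one-step descent of FlexATC: with `A, B` symmetric commuting,
`A𝟙 = 𝟙`, `B ⪰ 0`, `null(B) = span(𝟙)`, `A² + B ⪯ I`, `p ∈ (0,1]`, `u, u⋆ ∈ range(√B)`,
`z = w − √B u`, `z⋆ = w⋆ − √B u⋆` with `Bz⋆ = 0`, `x⋆ = prox_{αr}(Az⋆)`, and the random
update `x⁺ = prox_{αr}((θA + (1−θ)I)z)`, `u⁺ = u + pθ√B z` with `θ` Bernoulli(`p`):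
`E[‖x⁺ − x⋆‖² + (1/p²)‖u⁺ − u⋆‖²] ≤ ‖w − w⋆‖² + (1 − p²σ_m(B))(1/p²)‖u − u⋆‖²`
(the expectation over `θ` is written out explicitly; `σ_m(B)` is the smallest nonzero
eigenvalue of `B`, and norms are Euclidean, written via dot products). -/
theorem stmt_10 {n : ℕ} (A B : Matrix (Fin n) (Fin n) ℝ)
    (hAsymm : Aᵀ = A) (hBsymm : Bᵀ = B) (hcomm : A * B = B * A)
    (hAone : A *ᵥ (1 : Fin n → ℝ) = 1)
    (hB : B.PosSemidef)
    (hnull : ∀ v : Fin n → ℝ, B *ᵥ v = 0 ↔ ∃ t : ℝ, v = t • (1 : Fin n → ℝ))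
    (hIAB : (1 - A * A - B).PosSemidef)
    (p : ℝ) (hp0 : 0 < p) (hp1 : p ≤ 1)
    (σm : ℝ) (hσm : σm = sInf {t : ℝ | t ∈ spectrum ℝ B ∧ t ≠ 0})
    (r : (Fin n → ℝ) → ℝ) (hconv : ConvexOn ℝ Set.univ r) (hlsc : LowerSemicontinuous r)
    (α : ℝ) (hα : 0 < α)
    (prox : (Fin n → ℝ) → (Fin n → ℝ))
    (hprox : ∀ x, IsMinOn (fun s => r s + 1 / (2 * α) * ((s - x) ⬝ᵥ (s - x)))
      Set.univ (prox x))
    (w u ws us z zs xs : Fin n → ℝ)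
    (hu : u ∈ Set.range (fun v => hB.sqrt *ᵥ v))
    (hus : us ∈ Set.range (fun v => hB.sqrt *ᵥ v))
    (hz : z = w - hB.sqrt *ᵥ u)
    (hzs : zs = ws - hB.sqrt *ᵥ us)
    (hfix : B *ᵥ zs = 0)
    (hxs : xs = prox (A *ᵥ zs)) :
    p * ((prox (A *ᵥ z) - xs) ⬝ᵥ (prox (A *ᵥ z) - xs) +
        1 / p ^ 2 * ((u + p • (hB.sqrt *ᵥ z) - us) ⬝ᵥ (u + p • (hB.sqrt *ᵥ z) - us))) +
      (1 - p) * ((prox z - xs) ⬝ᵥ (prox z - xs) + 1 / p ^ 2 * ((u - us) ⬝ᵥ (u - us))) ≤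
    (w - ws) ⬝ᵥ (w - ws) + (1 - p ^ 2 * σm) * (1 / p ^ 2) * ((u - us) ⬝ᵥ (u - us)) := by
  set S := hB.sqrt with hS
  have hSpsd := sqrt_psd_aux hB
  have hSsym : Sᵀ = S := by
    have h := hSpsd.1
    rwa [Matrix.IsHermitian, conjTranspose_eq_transpose_of_trivial] at h
  have hSS : S * S = B := sqrt_mul_self_aux hB
  obtain ⟨ua, hua⟩ := hu
  obtain ⟨ub, hub⟩ := hus
  simp only at hua hub
  set e := z - zs with he
  set d := u - us with hd
  set c := ua - ub with hc
  have hdc : d = S *ᵥ c := by rw [hd, hc, ← hua, ← hub, mulVec_sub]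
  obtain ⟨t0, ht0⟩ := (hnull zs).mp hfix
  have hAzs : A *ᵥ zs = zs := by rw [ht0, mulVec_smul, hAone]
  have hSzs : S *ᵥ zs = 0 := by
    have h1 : zs ⬝ᵥ (S *ᵥ (S *ᵥ zs)) = (S *ᵥ zs) ⬝ᵥ (S *ᵥ zs) := dot_symm S hSsym zs (S *ᵥ zs)
    rw [mulVec_mulVec, hSS, hfix, dotProduct_zero] at h1
    exact dotProduct_self_eq_zero.mp h1.symm
  -- nonexpansiveness bounds
  have hP1 : (prox (A *ᵥ z) - xs) ⬝ᵥ (prox (A *ᵥ z) - xs) ≤ (A *ᵥ e) ⬝ᵥ (A *ᵥ e) := by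
    rw [hxs]
    have h := prox_nonexpansive r hconv α hα prox hprox (A *ᵥ z) (A *ᵥ zs)
    rwa [← mulVec_sub, ← he] at h
  have hP2 : (prox z - xs) ⬝ᵥ (prox z - xs) ≤ e ⬝ᵥ e := by
    rw [hxs, hAzs]
    have h := prox_nonexpansive r hconv α hα prox hprox z zs
    rwa [← he] at h
  -- vector identities
  have hUD : u + p • (S *ᵥ z) - us = d + p • (S *ᵥ e) := by
    have h : S *ᵥ e = S *ᵥ z := by rw [he, mulVec_sub, hSzs, sub_zero]
    rw [h, hd]; abel
  have hW : w - ws = e + S *ᵥ d := by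
    rw [he, hd, hz, hzs, mulVec_sub]; abel
  -- quadratic form facts
  have hA2 : e ⬝ᵥ ((A * A) *ᵥ e) = (A *ᵥ e) ⬝ᵥ (A *ᵥ e) := by
    rw [← mulVec_mulVec]; exact dot_symm A hAsymm e (A *ᵥ e)
  have hBe : e ⬝ᵥ (B *ᵥ e) = (S *ᵥ e) ⬝ᵥ (S *ᵥ e) := by
    rw [← hSS, ← mulVec_mulVec]; exact dot_symm S hSsym e (S *ᵥ e)
  have h1 : (A *ᵥ e) ⬝ᵥ (A *ᵥ e) + (S *ᵥ e) ⬝ᵥ (S *ᵥ e) ≤ e ⬝ᵥ e := by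
    have hq := hIAB.dotProduct_mulVec_nonneg e
    simp only [star_trivial, sub_mulVec, one_mulVec, dotProduct_sub] at hq
    rw [hA2, hBe] at hq
    linarith
  -- spectral bound
  have hdd : d ⬝ᵥ d = c ⬝ᵥ (B *ᵥ c) := by
    rw [hdc]
    have h := dot_symm S hSsym c (S *ᵥ c)
    rw [mulVec_mulVec, hSS] at h
    exact h.symm
  have hsd : (S *ᵥ d) ⬝ᵥ (S *ᵥ d) = c ⬝ᵥ ((B * B) *ᵥ c) := by
    have hBd : S *ᵥ d = B *ᵥ c := by rw [hdc, mulVec_mulVec, hSS]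
    rw [hBd]
    have h := dot_symm B hBsymm c (B *ᵥ c)
    rw [mulVec_mulVec] at h
    exact h.symm
  have h2 : σm * (d ⬝ᵥ d) ≤ (S *ᵥ d) ⬝ᵥ (S *ᵥ d) := by
    have hq := (spec_psd B hB σm hσm).dotProduct_mulVec_nonneg c
    simp only [star_trivial, sub_mulVec, smul_mulVec, dotProduct_sub,
      dotProduct_smul, smul_eq_mul] at hq
    rw [hdd, hsd]
    linarith
  -- cross term
  have hx : e ⬝ᵥ (S *ᵥ d) = d ⬝ᵥ (S *ᵥ e) := by
    rw [dot_symm S hSsym e d, dotProduct_comm]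
  -- dot product expansions
  have hUDexp : (d + p • (S *ᵥ e)) ⬝ᵥ (d + p • (S *ᵥ e)) =
      d ⬝ᵥ d + 2 * p * (d ⬝ᵥ (S *ᵥ e)) + p ^ 2 * ((S *ᵥ e) ⬝ᵥ (S *ᵥ e)) := by
    simp only [dotProduct_add, add_dotProduct, dotProduct_smul, smul_dotProduct, smul_eq_mul]
    rw [dotProduct_comm (S *ᵥ e) d]
    ring
  have hWexp : (e + S *ᵥ d) ⬝ᵥ (e + S *ᵥ d) =
      e ⬝ᵥ e + 2 * (d ⬝ᵥ (S *ᵥ e)) + (S *ᵥ d) ⬝ᵥ (S *ᵥ d) := by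
    simp only [dotProduct_add, add_dotProduct]
    rw [dotProduct_comm (S *ᵥ d) e, hx]
    ring
  rw [hUD, hW, hUDexp, hWexp]
  -- scalar abbreviations
  set P1 := (prox (A *ᵥ z) - xs) ⬝ᵥ (prox (A *ᵥ z) - xs) with hP1d
  set P2 := (prox z - xs) ⬝ᵥ (prox z - xs) with hP2d
  set aa := (A *ᵥ e) ⬝ᵥ (A *ᵥ e) with haad
  set ss := (S *ᵥ e) ⬝ᵥ (S *ᵥ e) with hssd
  set ee := e ⬝ᵥ e with heed
  set dd := d ⬝ᵥ d with hddd
  set sd := (S *ᵥ d) ⬝ᵥ (S *ᵥ d) with hsdd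
  set X := d ⬝ᵥ (S *ᵥ e) with hXd
  have hp2 : (0 : ℝ) < p ^ 2 := by positivity
  rw [← mul_le_mul_iff_right₀ hp2]
  have hL : p ^ 2 * (p * (P1 + 1 / p ^ 2 * (dd + 2 * p * X + p ^ 2 * ss)) +
      (1 - p) * (P2 + 1 / p ^ 2 * dd)) =
      p ^ 3 * P1 + p * (dd + 2 * p * X + p ^ 2 * ss) + (1 - p) * p ^ 2 * P2 + (1 - p) * dd := by
    field_simp
    ring
  have hR : p ^ 2 * ((ee + 2 * X + sd) + (1 - p ^ 2 * σm) * (1 / p ^ 2) * dd) =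
      p ^ 2 * (ee + 2 * X + sd) + (1 - p ^ 2 * σm) * dd := by
    field_simp
  rw [hL, hR]
  have hs1 : p ^ 3 * P1 ≤ p ^ 3 * aa :=
    mul_le_mul_of_nonneg_left hP1 (by positivity)
  have hs2 : (p ^ 2 - p ^ 3) * P2 ≤ (p ^ 2 - p ^ 3) * ee := by
    apply mul_le_mul_of_nonneg_left hP2
    nlinarith
  have hs3 : p ^ 3 * (aa + ss) ≤ p ^ 3 * ee :=
    mul_le_mul_of_nonneg_left h1 (by positivity)
  have hs4 : p ^ 2 * (σm * dd) ≤ p ^ 2 * sd :=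
    mul_le_mul_of_nonneg_left h2 (by positivity)
  nlinarith [hs1, hs2, hs3, hs4]
end

section
/- Let W be symmetric with W𝟙 = 𝟙 and spectral radius of W restricted to 𝟙^⊥ equal to ρ < 1, and c ∈ (0, 1/2]. Set A := I − c(I − W) and B := c(I − W). Then A = Aᵀ, A𝟙 = 𝟙, B ⪰ 0, null(B) = span(𝟙), and I − A² − B ⪰ 0. -/
/-!
Put `L = 1 - W`, so that `B = c • L` and `1 - A² - B = B - B²`. Every vector splits as
`u + a • 𝟙` with `u ⊥ 𝟙`, and since `L` is symmetric with `L 𝟙 = 0` its quadratic form only sees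
`u`, where the spectral bound gives `(1 - ρ)‖u‖² ≤ uᵀ L u ≤ (1 + ρ)‖u‖² ≤ 2‖u‖²`. The lower bound
gives `B ⪰ 0` and `null B = span 𝟙`; the upper bound together with `c ≤ 1/2` gives `1 - B ⪰ 0`.
Finally `B - B² = B (1 - B)` is a product of commuting positive semidefinite matrices.
-/

open Matrix

namespace Matrix

variable {ι : Type*} [Fintype ι]

theorem exists_eq_add_smul_one {K : Type*} [Field K] [CharZero K] (v : ι → K) :
    ∃ (u : ι → K) (a : K), u ⬝ᵥ 1 = 0 ∧ v = u + a • 1 := by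
  cases isEmpty_or_nonempty ι
  · exact ⟨v, 0, by simp [dotProduct], by simp⟩
  · have hcard : (Fintype.card ι : K) ≠ 0 := Nat.cast_ne_zero.mpr Fintype.card_ne_zero
    refine ⟨v - ((v ⬝ᵥ 1) / Fintype.card ι) • 1, (v ⬝ᵥ 1) / Fintype.card ι, ?_, by abel⟩
    rw [sub_dotProduct, smul_dotProduct, one_dotProduct_one, smul_eq_mul,
      div_mul_cancel₀ _ hcard, sub_self]

theorem add_smul_one_dotProduct_add_smul_one {R : Type*} [CommSemiring R] {u : ι → R}
    (hu : u ⬝ᵥ 1 = 0) (a : R) :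
    (u + a • 1) ⬝ᵥ (u + a • 1) = u ⬝ᵥ u + a ^ 2 * Fintype.card ι := by
  simp only [dotProduct_add, add_dotProduct, dotProduct_smul, smul_dotProduct, smul_eq_mul,
    one_dotProduct_one, hu, dotProduct_comm 1 u]
  ring

theorem dotProduct_mulVec_add_of_mulVec_eq_zero {R : Type*} [CommSemiring R]
    {L : Matrix ι ι R} (hL : Lᵀ = L) {x : ι → R} (hx : L *ᵥ x = 0) (v : ι → R) :
    (v + x) ⬝ᵥ (L *ᵥ (v + x)) = v ⬝ᵥ (L *ᵥ v) := by
  have hxL : x ᵥ* L = 0 := by rw [← mulVec_transpose, hL, hx]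
  rw [mulVec_add, hx, add_zero, add_dotProduct, dotProduct_mulVec x, hxL, zero_dotProduct,
    add_zero]

section Real

variable {L : Matrix ι ι ℝ}

theorem dotProduct_mulVec_add_smul_one (hL : Lᵀ = L) (hL1 : L *ᵥ 1 = 0) (u : ι → ℝ) (a : ℝ) :
    (u + a • 1) ⬝ᵥ (L *ᵥ (u + a • 1)) = u ⬝ᵥ (L *ᵥ u) :=
  dotProduct_mulVec_add_of_mulVec_eq_zero hL (by rw [mulVec_smul, hL1, smul_zero]) u

theorem mulVec_eq_zero_iff_exists_eq_smul_one (hL1 : L *ᵥ 1 = 0)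
    (hpos : ∀ u, u ⬝ᵥ 1 = 0 → u ≠ 0 → 0 < u ⬝ᵥ (L *ᵥ u)) (v : ι → ℝ) :
    L *ᵥ v = 0 ↔ ∃ t : ℝ, v = t • 1 := by
  constructor
  · obtain ⟨u, a, hu, rfl⟩ := exists_eq_add_smul_one v
    intro hv
    rw [mulVec_add, mulVec_smul, hL1, smul_zero, add_zero] at hv
    have hu0 : u = 0 := by
      by_contra hne
      simpa [hv] using hpos u hu hne
    exact ⟨a, by rw [hu0, zero_add]⟩
  · rintro ⟨t, rfl⟩
    rw [mulVec_smul, hL1, smul_zero]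

theorem posSemidef_of_mulVec_one_eq_zero (hL : Lᵀ = L) (hL1 : L *ᵥ 1 = 0)
    (hnonneg : ∀ u, u ⬝ᵥ 1 = 0 → 0 ≤ u ⬝ᵥ (L *ᵥ u)) : L.PosSemidef := by
  refine .of_dotProduct_mulVec_nonneg (by simpa [IsHermitian] using hL) fun v => ?_
  obtain ⟨u, a, hu, rfl⟩ := exists_eq_add_smul_one v
  rw [star_trivial, dotProduct_mulVec_add_smul_one hL hL1]
  exact hnonneg u hu

theorem posSemidef_one_sub_smul_of_le_two [DecidableEq ι] (hL : Lᵀ = L) (hL1 : L *ᵥ 1 = 0)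
    (hle : ∀ u, u ⬝ᵥ 1 = 0 → u ⬝ᵥ (L *ᵥ u) ≤ 2 * (u ⬝ᵥ u))
    {c : ℝ} (hc0 : 0 ≤ c) (hc1 : c ≤ 1 / 2) : (1 - c • L).PosSemidef := by
  refine .of_dotProduct_mulVec_nonneg (by simp [IsHermitian, hL]) fun v => ?_
  obtain ⟨u, a, hu, rfl⟩ := exists_eq_add_smul_one v
  have hu2 : 0 ≤ u ⬝ᵥ u := by simpa using dotProduct_self_star_nonneg u
  have hnorm : u ⬝ᵥ u ≤ (u + a • 1) ⬝ᵥ (u + a • 1) := by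
    rw [add_smul_one_dotProduct_add_smul_one hu]
    exact le_add_of_nonneg_right (by positivity)
  rw [star_trivial, sub_mulVec, one_mulVec, dotProduct_sub, smul_mulVec, dotProduct_smul,
    dotProduct_mulVec_add_smul_one hL hL1, smul_eq_mul]
  nlinarith [mul_le_mul_of_nonneg_left (hle u hu) hc0, mul_nonneg (sub_nonneg.mpr hc1) hu2]

end Real

open scoped ComplexOrder MatrixOrder in
theorem PosSemidef.sub_mul_self {𝕜 : Type*} [RCLike 𝕜] [DecidableEq ι] {B : Matrix ι ι 𝕜}
    (hB : B.PosSemidef) (hB1 : (1 - B).PosSemidef) : (B - B * B).PosSemidef := by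
  have hprod := Commute.mul_nonneg hB.nonneg hB1.nonneg ((Commute.one_right B).sub_right (.refl B))
  rw [mul_sub, mul_one] at hprod
  exact hprod.posSemidef

end Matrix

theorem stmt_15_general {n : ℕ} (W : Matrix (Fin n) (Fin n) ℝ)
    (hWsymm : Wᵀ = W)
    (hWone : W *ᵥ (1 : Fin n → ℝ) = 1)
    (ρ : ℝ) (hρ1 : ρ < 1)
    (hspec : ∀ v : Fin n → ℝ, v ⬝ᵥ (1 : Fin n → ℝ) = 0 →
      |v ⬝ᵥ (W *ᵥ v)| ≤ ρ * (v ⬝ᵥ v))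
    (c : ℝ) (hc0 : 0 < c) (hc1 : c ≤ 1 / 2) :
    (1 - c • (1 - W))ᵀ = 1 - c • (1 - W) ∧
    (1 - c • (1 - W)) *ᵥ (1 : Fin n → ℝ) = 1 ∧
    (c • (1 - W)).PosSemidef ∧
    (∀ v : Fin n → ℝ, (c • (1 - W)) *ᵥ v = 0 ↔ ∃ t : ℝ, v = t • (1 : Fin n → ℝ)) ∧
    (1 - (1 - c • (1 - W)) * (1 - c • (1 - W)) - c • (1 - W)).PosSemidef := by
  set L := 1 - W with hLW
  have hL : Lᵀ = L := by rw [hLW, transpose_sub, transpose_one, hWsymm]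
  have hL1 : L *ᵥ 1 = 0 := by rw [hLW, sub_mulVec, one_mulVec, hWone, sub_self]
  have hsq (u : Fin n → ℝ) : 0 ≤ u ⬝ᵥ u := by simpa using dotProduct_self_star_nonneg u
  have hbounds : ∀ u, u ⬝ᵥ 1 = 0 →
      (1 - ρ) * (u ⬝ᵥ u) ≤ u ⬝ᵥ (L *ᵥ u) ∧ u ⬝ᵥ (L *ᵥ u) ≤ (1 + ρ) * (u ⬝ᵥ u) := by
    intro u hu
    rw [hLW, sub_mulVec, one_mulVec, dotProduct_sub]
    constructor <;> linarith [abs_le.mp (hspec u hu)]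
  have hpos : ∀ u, u ⬝ᵥ 1 = 0 → u ≠ 0 → 0 < u ⬝ᵥ (L *ᵥ u) := fun u hu hne =>
    (mul_pos (by linarith) (by simpa using dotProduct_self_star_pos_iff.mpr hne)).trans_le
      (hbounds u hu).1
  have hle : ∀ u, u ⬝ᵥ 1 = 0 → u ⬝ᵥ (L *ᵥ u) ≤ 2 * (u ⬝ᵥ u) := fun u hu =>
    (hbounds u hu).2.trans (by nlinarith [hsq u])
  have hBpsd : (c • L).PosSemidef := (posSemidef_of_mulVec_one_eq_zero hL hL1 fun u hu =>
    (mul_nonneg (by linarith) (hsq u)).trans (hbounds u hu).1).smul hc0.le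
  have hexpand (B : Matrix (Fin n) (Fin n) ℝ) : 1 - (1 - B) * (1 - B) - B = B - B * B := by
    noncomm_ring
  refine ⟨by rw [transpose_sub, transpose_one, transpose_smul, hL], ?_, hBpsd, fun v => ?_, ?_⟩
  · rw [sub_mulVec, one_mulVec, smul_mulVec, hL1, smul_zero, sub_zero]
  · rw [smul_mulVec, smul_eq_zero, or_iff_right hc0.ne']
    exact mulVec_eq_zero_iff_exists_eq_smul_one hL1 hpos v
  · rw [hexpand]
    exact hBpsd.sub_mul_self (posSemidef_one_sub_smul_of_le_two hL hL1 hle hc0.le hc1)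

/-- Let `W` be symmetric with `W𝟙 = 𝟙` and spectral radius on `𝟙^⊥` equal to
`ρ < 1` (expressed via the quadratic form bound on `𝟙^⊥`), and `c ∈ (0, 1/2]`. Then
`A = I − c(I − W)` and `B = c(I − W)` satisfy `A = Aᵀ`, `A𝟙 = 𝟙`, `B ⪰ 0`,
`null(B) = span(𝟙)`, and `I − A² − B ⪰ 0` (Assumption 3 for NIDS/ED/D²). -/
theorem stmt_15 {n : ℕ} (W : Matrix (Fin n) (Fin n) ℝ)
    (hWsymm : Wᵀ = W)
    (hWone : W *ᵥ (1 : Fin n → ℝ) = 1)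
    (ρ : ℝ) (hρ0 : 0 ≤ ρ) (hρ1 : ρ < 1)
    (hspec : ∀ v : Fin n → ℝ, v ⬝ᵥ (1 : Fin n → ℝ) = 0 →
      |v ⬝ᵥ (W *ᵥ v)| ≤ ρ * (v ⬝ᵥ v))
    (c : ℝ) (hc0 : 0 < c) (hc1 : c ≤ 1 / 2) :
    (1 - c • (1 - W))ᵀ = 1 - c • (1 - W) ∧
    (1 - c • (1 - W)) *ᵥ (1 : Fin n → ℝ) = 1 ∧
    (c • (1 - W)).PosSemidef ∧
    (∀ v : Fin n → ℝ, (c • (1 - W)) *ᵥ v = 0 ↔ ∃ t : ℝ, v = t • (1 : Fin n → ℝ)) ∧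
    (1 - (1 - c • (1 - W)) * (1 - c • (1 - W)) - c • (1 - W)).PosSemidef :=
  stmt_15_general W hWsymm hWone ρ hρ1 hspec c hc0 hc1
end
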